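/- For every integer n ≥ 2 and every real α with 0 < α < 1, the inequalities 2n·sin(πα/2) < A_n(α) < B_n(α) hold. -/
import Mathlib


/-- `A_n(α) = n - 1 + √(n² - 2n cos(πα) + 1)`. -/
noncomputable def Acoef (n : ℕ) (α : ℝ) : ℝ :=
  (n : ℝ) - 1 + Real.sqrt ((n : ℝ) ^ 2 - 2 * n * Real.cos (Real.pi * α) + 1)

/-- `B_n(α) = n + 1 + √(n² + 2n cos(πα) + 1)`. -/
noncomputable def Bcoef (n : ℕ) (α : ℝ) : ℝ :=
  (n : ℝ) + 1 + Real.sqrt ((n : ℝ) ^ 2 + 2 * n * Real.cos (Real.pi * α) + 1)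

/-- Lemma 4.1: for `n ≥ 2` and `0 < α < 1`, `2n sin(πα/2) < A_n(α) < B_n(α)`. -/
theorem stmt8 (n : ℕ) (hn : 2 ≤ n) (α : ℝ) (hα : 0 < α) (hα1 : α < 1) :
    2 * n * Real.sin (Real.pi * α / 2) < Acoef n α ∧ Acoef n α < Bcoef n α := by
  have hπ := Real.pi_pos
  have hN : (2 : ℝ) ≤ (n : ℝ) := by exact_mod_cast hn
  set N := (n : ℝ) with hNdef
  set c := Real.cos (Real.pi * α) with hcdef
  have hx0 : 0 < Real.pi * α := by positivity
  have hxπ : Real.pi * α < Real.pi := by nlinarith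
  have hc1 : c < 1 := by
    have := Real.cos_lt_cos_of_nonneg_of_le_pi (le_refl 0) hxπ.le hx0
    simpa [hcdef] using this
  have hcm1 : -1 < c := by
    have := Real.cos_lt_cos_of_nonneg_of_le_pi hx0.le (le_refl Real.pi) hxπ
    simpa [hcdef] using this
  set s := Real.sin (Real.pi * α / 2) with hsdef
  have hs0 : 0 < s := by
    apply Real.sin_pos_of_pos_of_lt_pi (by positivity)
    nlinarith
  have hs1 : s < 1 := by
    have hcos : 0 < Real.cos (Real.pi * α / 2) := by
      apply Real.cos_pos_of_mem_Ioo
      constructor <;> [nlinarith; nlinarith]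
    nlinarith [Real.sin_sq_add_cos_sq (Real.pi * α / 2), Real.neg_one_le_sin (Real.pi * α / 2)]
  have hcs : c = 1 - 2 * s ^ 2 := by
    have h := Real.cos_two_mul (Real.pi * α / 2)
    rw [show 2 * (Real.pi * α / 2) = Real.pi * α by ring] at h
    have h2 := Real.sin_sq_add_cos_sq (Real.pi * α / 2)
    nlinarith
  constructor
  · -- 2 n s < A n α
    rw [Acoef]
    have hkey : N ^ 2 - 2 * N * c + 1 = (N - 1) ^ 2 + 4 * N * s ^ 2 := by
      rw [hcs]; ring
    rw [← hcdef, ← hNdef, hkey]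
    rcases le_or_gt (2 * N * s) (N - 1) with h | h
    · have : 0 < Real.sqrt ((N - 1) ^ 2 + 4 * N * s ^ 2) := by
        apply Real.sqrt_pos.2; nlinarith
      linarith
    · have hge : 0 ≤ 2 * N * s - (N - 1) := by linarith
      have : 2 * N * s - (N - 1) < Real.sqrt ((N - 1) ^ 2 + 4 * N * s ^ 2) := by
        rw [Real.lt_sqrt (by nlinarith)]
        nlinarith [mul_pos (mul_pos (by linarith : (0:ℝ) < N) hs0) (by linarith : (0:ℝ) < 1 - s)]
      linarith
  · -- A < B
    rw [Acoef, Bcoef, ← hcdef, ← hNdef]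
    have h1 : Real.sqrt (N ^ 2 - 2 * N * c + 1) < N + 1 := by
      rw [show Real.sqrt (N ^ 2 - 2 * N * c + 1) < N + 1 ↔ N ^ 2 - 2 * N * c + 1 < (N + 1) ^ 2
        from Real.sqrt_lt' (by linarith)]
      nlinarith
    have h2 : N - 1 < Real.sqrt (N ^ 2 + 2 * N * c + 1) := by
      rw [Real.lt_sqrt (by linarith)]
      nlinarith
    linarith
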